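/- Existence of auxiliary vectors via paths in the communication graph: let {S_1,...,S_{c+1}} and {S'_1,...,S'_{c+1}} be two partitions of a finite set of lattice vectors in N, and let w_1,...,w_c ∈ M satisfy w_i(v) = 1 for v ∈ S_i \ S'_i, w_i(v) = -1 for v ∈ S'_i \ S_i, and w_i(v) = 0 for all other vectors v in the partitioned set. Define a graph G on vertices {1,...,c+1} with an edge between i and j iff S_i ∩ S'_j ≠ ∅ or S'_i ∩ S_j ≠ ∅. Then for every vertex j lying in the same connected component of G as a distinguished vertex m ≠ j of that component, there exist vectors u⁺_j, u⁻_j ∈ N such that w_j(u±_j) = ±1 and w_a(u±_j) = 0 for all a ∉ {j, m} with 1 ≤ a ≤ c. -/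

import Mathlib

/-!
Each edge `p — q` of the graph is witnessed by some `v_k` with `k ∈ S_p ∩ S'_q` (or `S'_p ∩ S_q`),
and since the `w_a(v_k) = [k ∈ S_a] - [k ∈ S'_a]` only see the blocks containing `k`, the vector
`±v_k` has weights `δ_p - δ_q`. Summing these along a path from `j` to `m` telescopes to a vector
with weights `δ_j - δ_m`; it and its negative are `u⁺_j` and `u⁻_j`.
-/

lemma ite_and_not_eq_ite_sub_ite (P Q : Prop) [Decidable P] [Decidable Q] :
    (if P ∧ ¬Q then (1 : ℤ) else if Q ∧ ¬P then -1 else 0) =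
      (if P then 1 else 0) - (if Q then 1 else 0) := by
  by_cases P <;> by_cases Q <;> simp_all

lemma mem_iff_eq_of_disjoint {V α : Type*} {S : V → Finset α}
    (hS : ∀ i j, i ≠ j → Disjoint (S i) (S j)) {k : α} {p : V} (hk : k ∈ S p) (b : V) :
    k ∈ S b ↔ b = p :=
  ⟨fun hb => by_contra fun hne => Finset.disjoint_left.mp (hS _ _ hne) hb hk, fun h => h ▸ hk⟩

lemma sub_mem_of_reflTransGen {V G F : Type*} [AddGroup G] [SetLike F G] [AddSubgroupClass F G]
    (H : F) (g : V → G) {r : V → V → Prop} (hr : ∀ p q, r p q → g p - g q ∈ H) {p q : V}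
    (hpq : Relation.ReflTransGen r p q) : g p - g q ∈ H := by
  induction hpq with
  | refl => rw [sub_self]; exact zero_mem H
  | tail _ hbc ih => simpa [sub_add_sub_cancel] using add_mem ih (hr _ _ hbc)

-- `e` sends a weight index to its vertex (`Fin.castSucc` for the theorem, where the last
-- vertex carries no weight).
def vertexIndicator {ι V : Type*} [DecidableEq V] (e : ι → V) (p : V) : ι → ℤ :=
  fun a => if e a = p then 1 else 0

section EdgeVectors

variable {ι V K N : Type*} [DecidableEq V] [DecidableEq K] [AddCommGroup N] [Module ℤ N]
  {S S' : V → Finset K} (hSdisj : ∀ i j, i ≠ j → Disjoint (S i) (S j))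
  (hS'disj : ∀ i j, i ≠ j → Disjoint (S' i) (S' j))
  (e : ι → V) (v : K → N) (w : ι → N →ₗ[ℤ] ℤ)
  (hw : ∀ a k, w a (v k) = (if k ∈ S (e a) then 1 else 0) - (if k ∈ S' (e a) then 1 else 0))
include hSdisj hS'disj hw

lemma pi_apply_eq_vertexIndicator_sub {k : K} {p q : V} (hp : k ∈ S p) (hq : k ∈ S' q) :
    LinearMap.pi w (v k) = vertexIndicator e p - vertexIndicator e q := by
  ext a
  simp only [LinearMap.pi_apply, hw, Pi.sub_apply, vertexIndicator,
    mem_iff_eq_of_disjoint hSdisj hp, mem_iff_eq_of_disjoint hS'disj hq]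

lemma vertexIndicator_sub_mem_range {p q : V}
    (hpq : (S p ∩ S' q).Nonempty ∨ (S' p ∩ S q).Nonempty) :
    vertexIndicator e p - vertexIndicator e q ∈ LinearMap.range (LinearMap.pi w) := by
  rcases hpq with ⟨k, hk⟩ | ⟨k, hk⟩
  · rw [Finset.mem_inter] at hk
    exact ⟨v k, pi_apply_eq_vertexIndicator_sub hSdisj hS'disj e v w hw hk.1 hk.2⟩
  · rw [Finset.mem_inter] at hk
    refine ⟨-v k, ?_⟩
    rw [map_neg, pi_apply_eq_vertexIndicator_sub hSdisj hS'disj e v w hw hk.2 hk.1, neg_sub]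

end EdgeVectors

theorem exists_auxiliary_vectors_general (n R c : ℕ)
    (v : Fin R → (Fin n → ℤ))
    (S S' : Fin (c + 1) → Finset (Fin R))
    (hSdisj : ∀ i j, i ≠ j → Disjoint (S i) (S j))
    (hS'disj : ∀ i j, i ≠ j → Disjoint (S' i) (S' j))
    (w : Fin c → ((Fin n → ℤ) →ₗ[ℤ] ℤ))
    (hw : ∀ (i : Fin c) (k : Fin R), w i (v k) =
      if k ∈ S i.castSucc ∧ k ∉ S' i.castSucc then 1
      else if k ∈ S' i.castSucc ∧ k ∉ S i.castSucc then -1 else 0)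
    (Adj : Fin (c + 1) → Fin (c + 1) → Prop)
    (hAdj : ∀ i j, Adj i j ↔ ((S i ∩ S' j).Nonempty ∨ (S' i ∩ S j).Nonempty))
    (j : Fin c) (m : Fin (c + 1)) (hjm : j.castSucc ≠ m)
    (hconn : Relation.ReflTransGen Adj j.castSucc m) :
    ∃ up um : Fin n → ℤ, w j up = 1 ∧ w j um = -1 ∧
      ∀ a : Fin c, a ≠ j → a.castSucc ≠ m → w a up = 0 ∧ w a um = 0 := by
  have hw' : ∀ a k, w a (v k) =
      (if k ∈ S a.castSucc then 1 else 0) - (if k ∈ S' a.castSucc then 1 else 0) := fun a k => by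
    rw [hw, ite_and_not_eq_ite_sub_ite]
  obtain ⟨u, hu⟩ := sub_mem_of_reflTransGen _ (vertexIndicator Fin.castSucc)
    (fun p q hpq => vertexIndicator_sub_mem_range hSdisj hS'disj _ v w hw' ((hAdj p q).mp hpq))
    hconn
  have hwu : ∀ a, w a u = vertexIndicator Fin.castSucc j.castSucc a -
      vertexIndicator Fin.castSucc m a := fun a => congrFun hu a
  refine ⟨u, -u, ?_, ?_, fun a ha ham => ?_⟩
  · simp [hwu, vertexIndicator, hjm]
  · simp [hwu, vertexIndicator, hjm]
  · simp [hwu, vertexIndicator, ha, ham]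

/-- Existence of auxiliary vectors via paths in the communication graph: given two
partitions `{Sᵢ}`, `{S'ᵢ}` (`i = 1, …, c+1`) of the index set of the lattice vectors
`v₁, …, v_R`, and weight vectors `wᵢ` (`i = 1, …, c`) with `wᵢ(v_k) = 1` for
`k ∈ Sᵢ \ S'ᵢ`, `wᵢ(v_k) = -1` for `k ∈ S'ᵢ \ Sᵢ` and `wᵢ(v_k) = 0` otherwise,
form the graph on `{1, …, c+1}` with an edge between `i` and `j` iff
`Sᵢ ∩ S'ⱼ ≠ ∅` or `S'ᵢ ∩ Sⱼ ≠ ∅`.  If the vertex `j` (with `j ≤ c`) lies in the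
same connected component as a distinguished vertex `m ≠ j`, then there are vectors
`u⁺ⱼ, u⁻ⱼ ∈ N` with `wⱼ(u±ⱼ) = ±1` and `w_a(u±ⱼ) = 0` for all `a ∉ {j, m}`. -/
theorem exists_auxiliary_vectors (n R c : ℕ)
    (v : Fin R → (Fin n → ℤ))
    (S S' : Fin (c + 1) → Finset (Fin R))
    (hSdisj : ∀ i j, i ≠ j → Disjoint (S i) (S j))
    (hS'disj : ∀ i j, i ≠ j → Disjoint (S' i) (S' j))
    (hScov : ∀ k, ∃ i, k ∈ S i)
    (hS'cov : ∀ k, ∃ i, k ∈ S' i)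
    (w : Fin c → ((Fin n → ℤ) →ₗ[ℤ] ℤ))
    (hw : ∀ (i : Fin c) (k : Fin R), w i (v k) =
      if k ∈ S i.castSucc ∧ k ∉ S' i.castSucc then 1
      else if k ∈ S' i.castSucc ∧ k ∉ S i.castSucc then -1 else 0)
    (Adj : Fin (c + 1) → Fin (c + 1) → Prop)
    (hAdj : ∀ i j, Adj i j ↔ ((S i ∩ S' j).Nonempty ∨ (S' i ∩ S j).Nonempty))
    (j : Fin c) (m : Fin (c + 1)) (hjm : j.castSucc ≠ m)
    (hconn : Relation.ReflTransGen Adj j.castSucc m) :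
    ∃ up um : Fin n → ℤ, w j up = 1 ∧ w j um = -1 ∧
      ∀ a : Fin c, a ≠ j → a.castSucc ≠ m → w a up = 0 ∧ w a um = 0 :=
  exists_auxiliary_vectors_general n R c v S S' hSdisj hS'disj w hw Adj hAdj j m hjm hconn
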